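/- arXiv:1804.07385 — 4 statements merged into one kernel-verified Lean document; each statement's English description precedes it below -/
import Mathlib

section
/- If T is a contraction on a Hilbert space H (i.e., ‖T‖ ≤ 1) and λ is a complex number with |λ| < 1, then the operator b_λ(T) = (T - λI)(I - conj(λ)T)⁻¹ is well-defined (I - conj(λ)T is invertible) and is itself a contraction. -/
open scoped InnerProductSpace ComplexConjugate
open ContinuousLinearMap

/-- The Möbius transform `b_λ(T) = (T - λI)(I - conj(λ)T)⁻¹` of an operator `T`,
defined using `Ring.inverse` (which yields the genuine inverse when `I - conj(λ)T`
is invertible). -/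
noncomputable def blam {H : Type*} [NormedAddCommGroup H] [InnerProductSpace ℂ H]
    [CompleteSpace H] (T : H →L[ℂ] H) (l : ℂ) : H →L[ℂ] H :=
  (T - l • (1 : H →L[ℂ] H)) * Ring.inverse ((1 : H →L[ℂ] H) - conj l • T)

/-!
For every vector `u`, with `v = T u`,
`‖u - conj λ • v‖² - ‖v - λ • u‖² = (1 - |λ|²)(‖u‖² - ‖v‖²) ≥ 0`,
so `‖(T - λI) u‖ ≤ ‖(I - conj(λ)T) u‖`. Substituting `u = (I - conj(λ)T)⁻¹ x`, which exists by
the Neumann series since `‖conj(λ)T‖ < 1`, gives `‖b_λ(T) x‖ ≤ ‖x‖`.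
-/

section MoebiusVectorIdentity

variable {𝕜 E : Type*} [RCLike 𝕜] [NormedAddCommGroup E] [InnerProductSpace 𝕜 E]

theorem norm_sub_conj_smul_sq_eq (u v : E) (l : 𝕜) :
    ‖u - conj l • v‖ ^ 2 = ‖v - l • u‖ ^ 2 + (1 - ‖l‖ ^ 2) * (‖u‖ ^ 2 - ‖v‖ ^ 2) := by
  have hcross : RCLike.re ⟪u, conj l • v⟫_𝕜 = RCLike.re ⟪v, l • u⟫_𝕜 := by
    rw [inner_smul_right, inner_smul_right, ← inner_conj_symm u v, ← map_mul, RCLike.conj_re]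
  rw [norm_sub_sq (𝕜 := 𝕜), norm_sub_sq (𝕜 := 𝕜), hcross, norm_smul, norm_smul,
    RCLike.norm_conj]
  ring

theorem norm_sub_smul_le_norm_sub_conj_smul {u v : E} (hvu : ‖v‖ ≤ ‖u‖) {l : 𝕜}
    (hl : ‖l‖ ≤ 1) : ‖v - l • u‖ ≤ ‖u - conj l • v‖ := by
  have hl2 : ‖l‖ ^ 2 ≤ 1 := pow_le_one₀ (norm_nonneg l) hl
  have hvu2 : ‖v‖ ^ 2 ≤ ‖u‖ ^ 2 := pow_le_pow_left₀ (norm_nonneg v) hvu 2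
  refine pow_le_pow_iff_left₀ (norm_nonneg _) (norm_nonneg _) two_ne_zero |>.mp ?_
  rw [norm_sub_conj_smul_sq_eq]
  nlinarith

end MoebiusVectorIdentity

theorem ContinuousLinearMap.norm_mul_inverse_le_one {𝕜 E : Type*} [NontriviallyNormedField 𝕜]
    [NormedAddCommGroup E] [NormedSpace 𝕜 E] {A B : E →L[𝕜] E} (hB : IsUnit B)
    (h : ∀ u, ‖A u‖ ≤ ‖B u‖) : ‖A * Ring.inverse B‖ ≤ 1 := by
  obtain ⟨B, rfl⟩ := hB
  refine opNorm_le_bound _ zero_le_one fun x => ?_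
  have hx : (B : E →L[𝕜] E) ((↑B⁻¹ : E →L[𝕜] E) x) = x := by
    rw [← mul_apply_eq_comp, Units.mul_inv, one_apply_eq_self]
  simpa only [Ring.inverse_unit, mul_apply_eq_comp, one_mul, hx] using
    h ((↑B⁻¹ : E →L[𝕜] E) x)

/-- If `T` is a contraction on a complex Hilbert space and `|λ| < 1`, then
`I - conj(λ)T` is invertible (so `b_λ(T)` is well-defined) and `b_λ(T)` is a
contraction. -/
theorem blam_wellDefined_and_contraction {H : Type*} [NormedAddCommGroup H]
    [InnerProductSpace ℂ H] [CompleteSpace H] (T : H →L[ℂ] H) (hT : ‖T‖ ≤ 1)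
    (l : ℂ) (hl : ‖l‖ < 1) :
    IsUnit ((1 : H →L[ℂ] H) - conj l • T) ∧ ‖blam T l‖ ≤ 1 := by
  have hsmall : ‖conj l • T‖ < 1 :=
    calc ‖conj l • T‖ ≤ ‖conj l‖ * ‖T‖ := norm_smul_le _ _
      _ ≤ ‖l‖ * 1 := by rw [RCLike.norm_conj]; gcongr
      _ < 1 := by rwa [mul_one]
  have hunit := isUnit_one_sub_of_norm_lt_one hsmall
  refine ⟨hunit, norm_mul_inverse_le_one hunit fun u => ?_⟩
  have hTu : ‖T u‖ ≤ ‖u‖ := by simpa using T.le_of_opNorm_le hT u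
  simpa only [sub_apply, smul_apply, one_apply_eq_self] using
    norm_sub_smul_le_norm_sub_conj_smul hTu hl.le
end

section
/- For any contraction T on a Hilbert space, the equality trace(I - T*T) + dim ker T* = trace(I - T T*) + dim ker T holds (as an identity of extended nonnegative reals). -/
open scoped InnerProductSpace ENNReal
open ContinuousLinearMap Filter Topology

/-!
Write `D = 1 - T*T` and `D' = 1 - TT*`; both are positive contractions. For a positive
contraction `A` the numbers `⟪Aⁿx, x⟫` decrease, so `‖Aⁿx - Aᵐx‖² = ⟪A²ⁿx, x⟫ + ⟪A²ᵐx, x⟫ -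
2⟪Aⁿ⁺ᵐx, x⟫` shows that `Aⁿx` converges; its limit is the projection of `x` onto `ker (1 - A)`.
Telescoping then gives `tr A = ∑ₙ tr (Aⁿ⁺¹ - Aⁿ⁺²) + dim ker (1 - A)`, and `ker (1 - D) = ker T`,
`ker (1 - D') = ker T*`. The telescoped terms agree for `D` and `D'`: since `T D = D' T`, the
operator `X = T (√D)ᵐ` has `X*X = Dᵐ - Dᵐ⁺¹` and `XX* = D'ᵐ - D'ᵐ⁺¹`, and `tr (X*X) = tr (XX*)`
by Parseval's identity.
-/

namespace HilbertBasis

variable {ι κ 𝕜 E F : Type*} [RCLike 𝕜] [NormedAddCommGroup E] [InnerProductSpace 𝕜 E]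
  [NormedAddCommGroup F] [InnerProductSpace 𝕜 F]

theorem tsum_enorm_inner_sq (b : HilbertBasis ι 𝕜 E) (x : E) :
    ∑' i, ‖⟪b i, x⟫_𝕜‖ₑ ^ 2 = ‖x‖ₑ ^ 2 := by
  have h := lp.hasSum_norm (p := 2) (by norm_num) (b.repr x)
  simp only [b.repr_apply_apply, LinearIsometryEquiv.norm_map, ENNReal.toReal_ofNat,
    Real.rpow_two] at h
  simp_rw [← ofReal_norm, ← ENNReal.ofReal_pow (norm_nonneg _)]
  rw [← ENNReal.ofReal_tsum_of_nonneg (fun _ ↦ by positivity) h.summable, h.tsum_eq]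

theorem tsum_enorm_apply_sq_eq_adjoint [CompleteSpace E] [CompleteSpace F]
    (e : HilbertBasis ι 𝕜 E) (f : HilbertBasis κ 𝕜 F) (X : E →L[𝕜] F) :
    ∑' i, ‖X (e i)‖ₑ ^ 2 = ∑' j, ‖adjoint X (f j)‖ₑ ^ 2 := calc
  ∑' i, ‖X (e i)‖ₑ ^ 2 = ∑' i, ∑' j, ‖⟪f j, X (e i)⟫_𝕜‖ₑ ^ 2 := by
    simp_rw [f.tsum_enorm_inner_sq]
  _ = ∑' j, ∑' i, ‖⟪e i, adjoint X (f j)⟫_𝕜‖ₑ ^ 2 := by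
    rw [ENNReal.tsum_comm]
    refine tsum_congr fun j ↦ tsum_congr fun i ↦ ?_
    rw [adjoint_inner_right, ← inner_conj_symm, RCLike.enorm_conj]
  _ = ∑' j, ‖adjoint X (f j)‖ₑ ^ 2 := by simp_rw [e.tsum_enorm_inner_sq]

theorem toENat_rank (b : HilbertBasis ι 𝕜 E) : (Module.rank 𝕜 E).toENat = ENat.card ι := by
  have hli : LinearIndependent 𝕜 b := b.orthonormal.linearIndependent
  cases finite_or_infinite ι with
  | inl hfin =>
    have hspan : Submodule.span 𝕜 (Set.range b) = ⊤ := by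
      have := FiniteDimensional.span_of_finite 𝕜 (Set.finite_range b)
      rw [← b.dense_span, (Submodule.closed_of_finiteDimensional _).submodule_topologicalClosure_eq]
    have := congrArg Cardinal.toENat (Module.Basis.mk hli hspan.ge).mk_eq_rank
    rwa [Cardinal.toENat_lift, Cardinal.toENat_lift, eq_comm] at this
  | inr hinf =>
    rw [ENat.card_eq_top_of_infinite, Cardinal.toENat_eq_top]
    exact hli.aleph0_le_rank

/-- `ENNReal.ofReal` clips negative diagonal entries: this is the trace only for positive `A`. -/
noncomputable def posTrace (e : HilbertBasis ι 𝕜 E) (A : E →L[𝕜] E) : ℝ≥0∞ :=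
  ∑' i, ENNReal.ofReal (A.reApplyInnerSelf (e i))

theorem posTrace_starProjection [CompleteSpace E] (e : HilbertBasis ι 𝕜 E) (K : Submodule 𝕜 E)
    [CompleteSpace K] : e.posTrace K.starProjection = (Module.rank 𝕜 K).toENat := by
  obtain ⟨w, f, -⟩ := exists_hilbertBasis 𝕜 K
  have h := f.tsum_enorm_apply_sq_eq_adjoint e K.subtypeL
  simp only [K.adjoint_subtypeL, Submodule.subtypeL_apply] at h
  have hunit (j : w) : ‖(f j : E)‖ₑ = 1 := by
    rw [← ofReal_norm, ← Submodule.coe_norm, f.orthonormal.1 j, ENNReal.ofReal_one]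
  simp only [hunit, one_pow, ENNReal.tsum_const, mul_one, ← f.toENat_rank] at h
  simp only [posTrace, reApplyInnerSelf_apply, K.re_inner_starProjection_eq_normSq,
    ENNReal.ofReal_pow (norm_nonneg _), ofReal_norm, h]

theorem posTrace_star_mul_self [CompleteSpace E] (e : HilbertBasis ι 𝕜 E) (X : E →L[𝕜] E) :
    e.posTrace (star X * X) = ∑' i, ‖X (e i)‖ₑ ^ 2 := by
  refine tsum_congr fun i ↦ ?_
  rw [reApplyInnerSelf_apply, mul_apply_eq_comp, star_eq_adjoint, adjoint_inner_left,
    inner_self_eq_norm_sq, ENNReal.ofReal_pow (norm_nonneg _), ofReal_norm]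

theorem posTrace_star_mul_self_comm [CompleteSpace E] (e : HilbertBasis ι 𝕜 E) (X : E →L[𝕜] E) :
    e.posTrace (star X * X) = e.posTrace (X * star X) := by
  have h := e.posTrace_star_mul_self (star X)
  rw [star_star] at h
  rw [h, posTrace_star_mul_self, star_eq_adjoint, e.tsum_enorm_apply_sq_eq_adjoint e]

end HilbertBasis

theorem ContinuousLinearMap.reApplyInnerSelf_sub {𝕜 E : Type*} [RCLike 𝕜] [NormedAddCommGroup E]
    [InnerProductSpace 𝕜 E] (B C : E →L[𝕜] E) (x : E) :
    (B - C).reApplyInnerSelf x = B.reApplyInnerSelf x - C.reApplyInnerSelf x := by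
  simp only [reApplyInnerSelf_apply, sub_apply, inner_sub_left, map_sub]

theorem ContinuousLinearMap.reApplyInnerSelf_mono {𝕜 E : Type*} [RCLike 𝕜] [NormedAddCommGroup E]
    [InnerProductSpace 𝕜 E] {B C : E →L[𝕜] E} (h : B ≤ C) (x : E) :
    B.reApplyInnerSelf x ≤ C.reApplyInnerSelf x := by
  have := ((le_def B C).mp h).re_inner_nonneg_left x
  rw [← reApplyInnerSelf_apply, reApplyInnerSelf_sub] at this
  linarith

theorem ENNReal.tsum_ofReal_sub_add_ofReal {g : ℕ → ℝ} {l : ℝ} (hg : Antitone g)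
    (hl : Tendsto g atTop (𝓝 l)) (hl₀ : 0 ≤ l) :
    ∑' n, ENNReal.ofReal (g n - g (n + 1)) + ENNReal.ofReal l = ENNReal.ofReal (g 0) := by
  have hstep (n : ℕ) : 0 ≤ g n - g (n + 1) := sub_nonneg.2 (hg n.le_succ)
  have hsum : HasSum (fun n ↦ g n - g (n + 1)) (g 0 - l) := by
    rw [hasSum_iff_tendsto_nat_of_nonneg hstep]
    simpa only [Finset.sum_range_sub'] using tendsto_const_nhds.sub hl
  rw [← ENNReal.ofReal_tsum_of_nonneg hstep hsum.summable, hsum.tsum_eq,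
    ← ENNReal.ofReal_add (sub_nonneg.2 (hg.le_of_tendsto hl 0)) hl₀, sub_add_cancel]

section PositiveContraction

variable {H : Type*} [NormedAddCommGroup H] [InnerProductSpace ℂ H] [CompleteSpace H]
  {A : H →L[ℂ] H}

theorem IsSelfAdjoint.inner_pow_apply_pow_apply (hA : IsSelfAdjoint A) (n m : ℕ) (x y : H) :
    ⟪(A ^ n) x, (A ^ m) y⟫_ℂ = ⟪(A ^ (m + n)) x, y⟫_ℂ := by
  have := (hA.pow m).isSymmetric ((A ^ n) x) y
  rw [pow_add, mul_apply_eq_comp]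
  exact this.symm

theorem IsSelfAdjoint.norm_pow_apply_sub_pow_apply_sq (hA : IsSelfAdjoint A) (n m : ℕ) (x : H) :
    ‖(A ^ n) x - (A ^ m) x‖ ^ 2 = (A ^ (n + n)).reApplyInnerSelf x
      + (A ^ (m + m)).reApplyInnerSelf x - 2 * (A ^ (m + n)).reApplyInnerSelf x := by
  rw [@norm_sub_sq ℂ, ← inner_self_eq_norm_sq (𝕜 := ℂ), ← inner_self_eq_norm_sq (𝕜 := ℂ)]
  simp only [reApplyInnerSelf_apply, hA.inner_pow_apply_pow_apply]
  ring

theorem antitone_reApplyInnerSelf_pow (hA₀ : 0 ≤ A) (hA₁ : A ≤ 1) (x : H) :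
    Antitone fun n ↦ (A ^ n).reApplyInnerSelf x :=
  fun _ _ hnm ↦ reApplyInnerSelf_mono (CStarAlgebra.pow_antitone hA₀ hA₁ hnm) x

theorem exists_tendsto_reApplyInnerSelf_pow (hA₀ : 0 ≤ A) (hA₁ : A ≤ 1) (x : H) :
    ∃ L, Tendsto (fun n ↦ (A ^ n).reApplyInnerSelf x) atTop (𝓝 L) := by
  refine ⟨_, tendsto_atTop_ciInf (antitone_reApplyInnerSelf_pow hA₀ hA₁ x) ⟨0, ?_⟩⟩
  rintro _ ⟨n, rfl⟩
  exact (nonneg_iff_isPositive _).mp (CStarAlgebra.pow_nonneg hA₀ n) |>.re_inner_nonneg_left x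

theorem cauchySeq_pow_apply (hA₀ : 0 ≤ A) (hA₁ : A ≤ 1) (x : H) : CauchySeq fun n ↦ (A ^ n) x := by
  obtain ⟨L, hL⟩ := exists_tendsto_reApplyInnerSelf_pow hA₀ hA₁ x
  have hA := IsSelfAdjoint.of_nonneg hA₀
  have hsq : Tendsto (fun p : ℕ × ℕ ↦ (A ^ (p.1 + p.1)).reApplyInnerSelf x
      + (A ^ (p.2 + p.2)).reApplyInnerSelf x - 2 * (A ^ (p.2 + p.1)).reApplyInnerSelf x)
      (atTop ×ˢ atTop) (𝓝 (L + L - 2 * L)) := by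
    refine ((hL.comp ?_).add (hL.comp ?_)).sub ((hL.comp ?_).const_mul 2)
    · exact tendsto_fst.atTop_add_atTop tendsto_fst
    · exact tendsto_snd.atTop_add_atTop tendsto_snd
    · exact tendsto_snd.atTop_add_atTop tendsto_fst
  rw [show L + L - 2 * L = 0 by ring, prod_atTop_atTop_eq] at hsq
  rw [cauchySeq_iff_tendsto_dist_atTop_0]
  simpa only [dist_eq_norm, ← hA.norm_pow_apply_sub_pow_apply_sq, Real.sqrt_sq (norm_nonneg _),
    Real.sqrt_zero] using hsq.sqrt

theorem tendsto_pow_apply_starProjection (hA₀ : 0 ≤ A) (hA₁ : A ≤ 1) (x : H) :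
    Tendsto (fun n ↦ (A ^ n) x) atTop
      (𝓝 ((LinearMap.ker ((1 - A : H →L[ℂ] H) : H →ₗ[ℂ] H)).starProjection x)) := by
  obtain ⟨y, hy⟩ := cauchySeq_tendsto_of_complete (cauchySeq_pow_apply hA₀ hA₁ x)
  convert hy
  have hfix {w : H} (hw : w ∈ LinearMap.ker ((1 - A : H →L[ℂ] H) : H →ₗ[ℂ] H)) :
      Function.IsFixedPt A w := by
    have h := LinearMap.mem_ker.mp hw
    rw [coe_coe, sub_apply, one_apply_eq_self, sub_eq_zero] at h
    exact h.symm
  refine Submodule.eq_starProjection_of_mem_of_inner_eq_zero ?_ fun w hw ↦ ?_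
  · have hAy : Tendsto (fun n ↦ A ((A ^ n) x)) atTop (𝓝 (A y)) :=
      (A.continuous.tendsto y).comp hy
    have hy' : Tendsto (fun n ↦ A ((A ^ n) x)) atTop (𝓝 y) := by
      simpa only [Function.comp_def, pow_succ', mul_apply_eq_comp]
        using hy.comp (tendsto_add_atTop_nat 1)
    simp [tendsto_nhds_unique hAy hy']
  · have hzero (n : ℕ) : ⟪x - (A ^ n) x, w⟫_ℂ = 0 := by
      have hsymm : ⟪(A ^ n) x, w⟫_ℂ = ⟪x, (A ^ n) w⟫_ℂ :=
        (IsSelfAdjoint.of_nonneg hA₀ |>.pow n).isSymmetric x w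
      rw [inner_sub_left, hsymm, FunLike.coe_pow_eq_iterate, (hfix hw).iterate n, sub_self]
    exact tendsto_nhds_unique ((tendsto_const_nhds.sub hy).inner tendsto_const_nhds)
      (by simp only [hzero, tendsto_const_nhds])

theorem tendsto_reApplyInnerSelf_pow (hA₀ : 0 ≤ A) (hA₁ : A ≤ 1) (x : H) :
    Tendsto (fun n ↦ (A ^ n).reApplyInnerSelf x) atTop
      (𝓝 ((LinearMap.ker ((1 - A : H →L[ℂ] H) : H →ₗ[ℂ] H)).starProjection.reApplyInnerSelf x)) :=
  (RCLike.continuous_re.tendsto _).comp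
    ((tendsto_pow_apply_starProjection hA₀ hA₁ x).inner tendsto_const_nhds)

theorem posTrace_eq_tsum_add_rank {ι : Type*} (e : HilbertBasis ι ℂ H) (hA₀ : 0 ≤ A)
    (hA₁ : A ≤ 1) :
    e.posTrace A = ∑' n, e.posTrace (A ^ (n + 1) - A ^ (n + 2))
      + (Module.rank ℂ (LinearMap.ker ((1 - A : H →L[ℂ] H) : H →ₗ[ℂ] H))).toENat := by
  set K := LinearMap.ker ((1 - A : H →L[ℂ] H) : H →ₗ[ℂ] H)
  have hdiag (i : ι) : ENNReal.ofReal (A.reApplyInnerSelf (e i))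
      = ∑' n, ENNReal.ofReal ((A ^ (n + 1) - A ^ (n + 2)).reApplyInnerSelf (e i))
        + ENNReal.ofReal (K.starProjection.reApplyInnerSelf (e i)) := by
    have h := ENNReal.tsum_ofReal_sub_add_ofReal (g := fun n ↦ (A ^ (n + 1)).reApplyInnerSelf (e i))
      (fun _ _ hmn ↦ antitone_reApplyInnerSelf_pow hA₀ hA₁ (e i) (Nat.succ_le_succ hmn))
      ((tendsto_reApplyInnerSelf_pow hA₀ hA₁ (e i)).comp (tendsto_add_atTop_nat 1))
      (K.re_inner_starProjection_nonneg (e i))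
    rw [zero_add, pow_one] at h
    simp only [reApplyInnerSelf_sub]
    exact h.symm
  rw [HilbertBasis.posTrace, tsum_congr hdiag, ENNReal.tsum_add, ENNReal.tsum_comm,
    ← e.posTrace_starProjection K]
  rfl

end PositiveContraction

theorem CStarAlgebra.star_mul_self_le_one {A : Type*} [CStarAlgebra A] [PartialOrder A]
    [StarOrderedRing A] {a : A} (ha : ‖a‖ ≤ 1) : star a * a ≤ 1 := by
  rw [← CStarAlgebra.norm_le_one_iff_of_nonneg _ (star_mul_self_nonneg a),
    CStarRing.norm_star_mul_self]
  exact mul_le_one₀ ha (norm_nonneg a) ha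

section Contraction

variable {H ι : Type*} [NormedAddCommGroup H] [InnerProductSpace ℂ H] [CompleteSpace H]
  {T : H →L[ℂ] H}

theorem ker_one_sub_one_sub_star_mul_self (T : H →L[ℂ] H) :
    LinearMap.ker ((1 - (1 - star T * T) : H →L[ℂ] H) : H →ₗ[ℂ] H)
      = LinearMap.ker (T : H →ₗ[ℂ] H) := by
  rw [sub_sub_cancel, star_eq_adjoint, mul_def]
  exact ker_adjoint_comp_self T

theorem posTrace_one_sub_star_mul_self (e : HilbertBasis ι ℂ H) (hT : ‖T‖ ≤ 1) :
    e.posTrace (1 - star T * T)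
      = ∑' n, e.posTrace ((1 - star T * T) ^ (n + 1) - (1 - star T * T) ^ (n + 2))
        + (Module.rank ℂ (LinearMap.ker (T : H →ₗ[ℂ] H))).toENat := by
  rw [posTrace_eq_tsum_add_rank e (sub_nonneg.2 (CStarAlgebra.star_mul_self_le_one hT))
    (sub_le_self _ (star_mul_self_nonneg T)), ker_one_sub_one_sub_star_mul_self]

theorem posTrace_one_sub_star_mul_self_pow_sub_pow_succ (e : HilbertBasis ι ℂ H) (hT : ‖T‖ ≤ 1)
    (m : ℕ) :
    e.posTrace ((1 - star T * T) ^ m - (1 - star T * T) ^ (m + 1))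
      = e.posTrace ((1 - T * star T) ^ m - (1 - T * star T) ^ (m + 1)) := by
  set D := 1 - star T * T
  set D' := 1 - T * star T
  set s := CFC.sqrt D
  have hs : s * s = D :=
    CFC.sqrt_mul_sqrt_self D (sub_nonneg.2 (CStarAlgebra.star_mul_self_le_one hT))
  have hsa : IsSelfAdjoint (s ^ m) := (IsSelfAdjoint.of_nonneg (CFC.sqrt_nonneg D)).pow m
  have hsm : s ^ m * s ^ m = D ^ m := by rw [← hs, (Commute.refl s).mul_pow]
  have hcomm : Commute (s ^ m) D := by
    rw [← hs]
    exact ((Commute.refl s).mul_right (Commute.refl s)).pow_left m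
  have hintertwine : T * D ^ m = D' ^ m * T := by
    have : SemiconjBy T D D' := by
      simp only [SemiconjBy, D, D', mul_sub, sub_mul, mul_one, one_mul, mul_assoc]
    exact (this.pow_right m).eq
  have hstar : star (T * s ^ m) * (T * s ^ m) = D ^ m - D ^ (m + 1) := calc
    star (T * s ^ m) * (T * s ^ m) = s ^ m * (1 - D) * s ^ m := by
      rw [star_mul, hsa.star_eq, sub_sub_cancel]
      simp only [mul_assoc]
    _ = D ^ m - D ^ (m + 1) := by
      rw [mul_sub, mul_one, sub_mul, hcomm.eq, mul_assoc, hsm, pow_succ']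
  have hstar' : T * s ^ m * star (T * s ^ m) = D' ^ m - D' ^ (m + 1) := calc
    T * s ^ m * star (T * s ^ m) = T * D ^ m * star T := by
      rw [star_mul, hsa.star_eq, ← hsm]
      simp only [mul_assoc]
    _ = D' ^ m - D' ^ (m + 1) := by
      rw [hintertwine, mul_assoc, show T * star T = 1 - D' by simp [D'], mul_sub, mul_one,
        ← pow_succ]
  rw [← hstar, ← hstar', HilbertBasis.posTrace_star_mul_self_comm]

end Contraction

/-- For any contraction `T` on a Hilbert space, the identity
`trace(I - T*T) + dim ker T* = trace(I - TT*) + dim ker T` holds in `[0, ∞]`,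
the traces of the positive operators `I - T*T` and `I - TT*` being computed as
diagonal sums with respect to any Hilbert (orthonormal) basis. -/
theorem trace_defect_identity {H : Type*} [NormedAddCommGroup H]
    [InnerProductSpace ℂ H] [CompleteSpace H] (T : H →L[ℂ] H) (hT : ‖T‖ ≤ 1)
    {ι : Type*} (e : HilbertBasis ι ℂ H) :
    (∑' i, ENNReal.ofReal
        ((⟪((1 : H →L[ℂ] H) - (adjoint T).comp T) (e i), e i⟫_ℂ).re)) +
      (Cardinal.toENat (Module.rank ℂ (LinearMap.ker ((adjoint T : H →L[ℂ] H) : H →ₗ[ℂ] H))) : ℝ≥0∞) =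
    (∑' i, ENNReal.ofReal
        ((⟪((1 : H →L[ℂ] H) - T.comp (adjoint T)) (e i), e i⟫_ℂ).re)) +
      (Cardinal.toENat (Module.rank ℂ (LinearMap.ker (T : H →ₗ[ℂ] H))) : ℝ≥0∞) := by
  rw [← star_eq_adjoint, ← mul_def, ← mul_def]
  change e.posTrace (1 - star T * T) + _ = e.posTrace (1 - T * star T) + _
  have hB := posTrace_one_sub_star_mul_self e (T := star T) (by rwa [norm_star])
  rw [star_star] at hB
  rw [posTrace_one_sub_star_mul_self e hT, hB,
    tsum_congr fun n ↦ posTrace_one_sub_star_mul_self_pow_sub_pow_succ e hT (n + 1)]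
  ring
end

section
/- Let T be a contraction of class C_{1·} on a Hilbert space H (i.e., lim_n ‖Tⁿx‖ > 0 for every nonzero x) such that I - T*T is compact. Then T - λI is bounded below (hence left invertible) for every λ in the open unit disk. -/
/-!
If `T - λ` is not bounded below, there are unit vectors `uₙ` with `(T - λ) uₙ → 0`. Since
`1 - λ T* = (1 - T* T) + T* (T - λ)` and `‖λ T*‖ < 1`, the vectors `uₙ` are the image under the
invertible operator `(1 - λ T*)⁻¹` of `(1 - T* T) uₙ + o(1)`; compactness of `1 - T* T` thus
yields a subsequence converging to a unit vector `x` with `T x = λ x`. Then `‖Tⁿ x‖ = |λ|ⁿ → 0`,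
contradicting the `C_{1·}` hypothesis.
-/

open ContinuousLinearMap Filter Topology

section BoundedBelow

variable {𝕜 E F G : Type*} [RCLike 𝕜] [NormedAddCommGroup E] [NormedSpace 𝕜 E]
  [NormedAddCommGroup F] [NormedSpace 𝕜 F] [NormedAddCommGroup G] [NormedSpace 𝕜 G]

theorem ContinuousLinearMap.exists_seq_norm_eq_one_tendsto_zero (S : E →L[𝕜] F)
    (hS : ¬ ∃ c : ℝ, 0 < c ∧ ∀ x, c * ‖x‖ ≤ ‖S x‖) :
    ∃ u : ℕ → E, (∀ n, ‖u n‖ = 1) ∧ Tendsto (fun n ↦ S (u n)) atTop (𝓝 0) := by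
  push Not at hS
  have hseq : ∀ n : ℕ, ∃ u : E, ‖u‖ = 1 ∧ ‖S u‖ < 1 / (n + 1) := by
    intro n
    obtain ⟨x, hx⟩ := hS (1 / (n + 1)) (by positivity)
    have hx0 : x ≠ 0 := by rintro rfl; simp at hx
    refine ⟨(‖x‖⁻¹ : 𝕜) • x, norm_smul_inv_norm hx0, ?_⟩
    rw [map_smul, norm_smul, norm_inv, RCLike.norm_ofReal, abs_norm,
      inv_mul_lt_iff₀ (norm_pos_iff.mpr hx0), mul_comm]
    exact hx
  choose u hu_norm hu_lt using hseq
  refine ⟨u, hu_norm, tendsto_zero_iff_norm_tendsto_zero.mpr ?_⟩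
  exact squeeze_zero (fun n ↦ norm_nonneg _) (fun n ↦ (hu_lt n).le)
    tendsto_one_div_add_atTop_nhds_zero_nat

theorem ContinuousLinearMap.exists_pos_mul_norm_le_of_injective_of_equiv_eq_add_comp
    (S : E →L[𝕜] F) (hS : Function.Injective S) (V : E ≃L[𝕜] G) {K : E →L[𝕜] G}
    (hK : IsCompactOperator K) (B : F →L[𝕜] G) (hV : (V : E →L[𝕜] G) = K + B ∘L S) :
    ∃ c : ℝ, 0 < c ∧ ∀ x, c * ‖x‖ ≤ ‖S x‖ := by
  by_contra h
  obtain ⟨u, hu_norm, hSu⟩ := S.exists_seq_norm_eq_one_tendsto_zero h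
  have hu_bdd : Bornology.IsBounded (Set.range u) :=
    isBounded_iff_forall_norm_le.mpr ⟨1, by rintro _ ⟨n, rfl⟩; exact (hu_norm n).le⟩
  obtain ⟨y, -, φ, hφ, hKu⟩ := (hK.isCompact_closure_image_of_bounded hu_bdd).tendsto_subseq
    fun n ↦ subset_closure ⟨u n, ⟨n, rfl⟩, rfl⟩
  have hSuφ := hSu.comp hφ.tendsto_atTop
  have hVu : Tendsto (fun n ↦ V (u (φ n))) atTop (𝓝 y) := by
    have := hKu.add ((B.continuous.tendsto 0).comp hSuφ)
    simp only [add_zero, map_zero] at this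
    refine this.congr fun n ↦ ?_
    simp [← ContinuousLinearEquiv.coe_coe, hV]
  have hu : Tendsto (fun n ↦ u (φ n)) atTop (𝓝 (V.symm y)) := by
    simpa only [Function.comp_def, V.symm_apply_apply] using
      (V.symm.continuous.tendsto y).comp hVu
  have hx : V.symm y ≠ 0 := by
    refine norm_ne_zero_iff.mp (ne_of_eq_of_ne ?_ one_ne_zero)
    exact tendsto_nhds_unique hu.norm (by simp only [hu_norm]; exact tendsto_const_nhds)
  have hSx : S (V.symm y) = 0 := tendsto_nhds_unique ((S.continuous.tendsto _).comp hu) hSuφ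
  exact hx ((map_eq_zero_iff S hS).mp hSx)

end BoundedBelow

section Eigenvalues

variable {𝕜 E : Type*} [NontriviallyNormedField 𝕜] [NormedAddCommGroup E] [NormedSpace 𝕜 E]

theorem ContinuousLinearMap.pow_apply_of_apply_eq_smul {T : E →L[𝕜] E} {l : 𝕜} {x : E}
    (hx : T x = l • x) (n : ℕ) : (T ^ n) x = l ^ n • x := by
  induction n with
  | zero => simp
  | succ n ih => rw [pow_succ', mul_apply_eq_comp, ih, map_smul, hx, smul_smul, pow_succ]

theorem ContinuousLinearMap.injective_sub_smul_one_of_iInf_norm_pow_apply_pos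
    (T : E →L[𝕜] E) (hT : ∀ x : E, x ≠ 0 → 0 < ⨅ n : ℕ, ‖(T ^ n) x‖) {l : 𝕜} (hl : ‖l‖ < 1) :
    Function.Injective (T - l • 1 : E →L[𝕜] E) := by
  refine (injective_iff_map_eq_zero _).mpr fun x hx ↦ ?_
  by_contra hx0
  have hTx : T x = l • x := by simpa [sub_eq_zero] using hx
  have hle : ∀ n : ℕ, ⨅ n : ℕ, ‖(T ^ n) x‖ ≤ ‖l‖ ^ n * ‖x‖ := fun n ↦ by
    rw [← norm_pow, ← norm_smul, ← pow_apply_of_apply_eq_smul hTx]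
    exact ciInf_le ⟨0, by rintro _ ⟨m, rfl⟩; exact norm_nonneg _⟩ n
  have hlim : Tendsto (fun n : ℕ ↦ ‖l‖ ^ n * ‖x‖) atTop (𝓝 0) := by
    simpa using (tendsto_pow_atTop_nhds_zero_of_lt_one (norm_nonneg l) hl).mul_const ‖x‖
  exact (hT x hx0).not_ge (ge_of_tendsto' hlim hle)

end Eigenvalues

/-- Let `T` be a contraction of class `C_{1·}` (i.e. `inf_n ‖Tⁿ x‖ > 0` for every
`x ≠ 0`) such that `I - T*T` is compact. Then `T - λI` is bounded below for every
`λ` in the open unit disk. -/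
theorem sub_smul_one_bounded_below_of_C1_compact {H : Type*} [NormedAddCommGroup H]
    [InnerProductSpace ℂ H] [CompleteSpace H] (T : H →L[ℂ] H) (hT : ‖T‖ ≤ 1)
    (hC1 : ∀ x : H, x ≠ 0 → 0 < ⨅ n : ℕ, ‖(T ^ n) x‖)
    (hcpt : IsCompactOperator (⇑((1 : H →L[ℂ] H) - (adjoint T).comp T))) :
    ∀ l : ℂ, ‖l‖ < 1 → ∃ c : ℝ, 0 < c ∧ ∀ x : H, c * ‖x‖ ≤ ‖(T - l • 1) x‖ := by
  intro l hl
  have hA : ‖l • adjoint T‖ < 1 := by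
    rw [norm_smul, LinearIsometryEquiv.norm_map]
    exact (mul_le_of_le_one_right (norm_nonneg l) hT).trans_lt hl
  -- `1 - l T* = (1 - T* T) + T* (T - l)`
  refine (T - l • 1).exists_pos_mul_norm_le_of_injective_of_equiv_eq_add_comp
    (T.injective_sub_smul_one_of_iInf_norm_pow_apply_pos hC1 hl)
    (ContinuousLinearEquiv.unitsEquiv ℂ H (Units.oneSub _ hA)) hcpt (adjoint T) ?_
  ext x
  simp [Units.oneSub]
end

section
/- Let T be a contraction of class C_{11} (both T and T* are of class C_{1·}) such that I - T*T is compact. Then the spectrum of T is contained in the unit circle. -/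
/-!
If `‖z‖ < 1` and `T x = z x`, then `‖Tⁿ x‖ = ‖z‖ⁿ ‖x‖ → 0`, so the `C_{1·}` conditions make
`T - z` and `T*` injective. As `‖z T*‖ < 1`, the operator `1 - z T*` is invertible, and
`T* (T - z) = (1 - z T*) - (1 - T* T)` is an injective compact perturbation of it, hence
invertible by the Fredholm alternative. So `T*` is onto, hence invertible, and then so is `T - z`.
Points with `‖z‖ > 1` are excluded by `‖T‖ ≤ 1`.
-/

open Filter Topology

namespace ContinuousLinearMap

section Eigenvector

variable {𝕜 E : Type*} [NormedField 𝕜] [NormedAddCommGroup E] [NormedSpace 𝕜 E]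

theorem iInf_norm_pow_apply_eq_zero_of_apply_eq_smul {A : E →L[𝕜] E} {z : 𝕜} (hz : ‖z‖ < 1)
    {x : E} (hx : A x = z • x) : ⨅ n : ℕ, ‖(A ^ n) x‖ = 0 := by
  have hpow (n : ℕ) : (A ^ n) x = z ^ n • x := by
    induction n with
    | zero => simp
    | succ n ih => rw [pow_succ, mul_apply_eq_comp, hx, map_smul, ih, smul_smul, pow_succ']
  have hlim : Tendsto (fun n : ℕ => ‖z‖ ^ n * ‖x‖) atTop (𝓝 0) := by
    simpa using (tendsto_pow_atTop_nhds_zero_of_lt_one (norm_nonneg z) hz).mul_const ‖x‖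
  refine le_antisymm (ge_of_tendsto' hlim fun n => ?_) (Real.iInf_nonneg fun _ => norm_nonneg _)
  calc ⨅ n : ℕ, ‖(A ^ n) x‖ ≤ ‖(A ^ n) x‖ := ciInf_le ⟨0, by rintro _ ⟨n, rfl⟩; positivity⟩ n
    _ = ‖z‖ ^ n * ‖x‖ := by rw [hpow, norm_smul, norm_pow]

theorem injective_sub_smul_one_of_forall_iInf_norm_pow_pos {A : E →L[𝕜] E}
    (hA : ∀ x : E, x ≠ 0 → 0 < ⨅ n : ℕ, ‖(A ^ n) x‖) {z : 𝕜} (hz : ‖z‖ < 1) :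
    Function.Injective (A - z • (1 : E →L[𝕜] E)) := by
  rw [← coe_coe, ← LinearMap.ker_eq_bot, Submodule.eq_bot_iff]
  intro x hx
  by_contra hx0
  have hAx : A x = z • x := by simpa [sub_eq_zero] using hx
  exact (hA x hx0).ne' (iInf_norm_pow_apply_eq_zero_of_apply_eq_smul hz hAx)

end Eigenvector

section Fredholm

variable {𝕜 E : Type*} [NontriviallyNormedField 𝕜] [NormedAddCommGroup E] [NormedSpace 𝕜 E]
  [CompleteSpace E]

theorem isUnit_sub_of_isCompactOperator_of_injective {S K : E →L[𝕜] E} (hS : IsUnit S)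
    (hK : IsCompactOperator K) (hinj : Function.Injective (S - K)) : IsUnit (S - K) := by
  set K' : E →L[𝕜] E := ↑hS.unit⁻¹ * K
  have hfactor : S - K = S * (1 - K') := by
    simp only [K', mul_sub, mul_one, ← mul_assoc, IsUnit.mul_val_inv, one_mul]
  rw [hfactor] at hinj ⊢
  refine hS.mul ?_
  rcases (hK.clm_comp _).hasEigenvalue_or_mem_resolventSet one_ne_zero (T := K') with heig | hres
  · obtain ⟨x, hx, hx0⟩ := heig.exists_hasEigenvector
    have hKx : K' x = x := by simpa using hx
    refine absurd (hinj (a₂ := 0) ?_) hx0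
    simp [hKx]
  · simpa [spectrum.mem_resolventSet_iff] using hres

theorem isUnit_of_isUnit_mul_of_injective {R A : E →L[𝕜] E} (hRA : IsUnit (R * A))
    (hR : Function.Injective R) : IsUnit A := by
  have hR_surj : Function.Surjective R := fun y =>
    ⟨A ((↑hRA.unit⁻¹ : E →L[𝕜] E) y), by
      rw [← mul_apply_eq_comp, ← mul_apply_eq_comp, IsUnit.mul_val_inv, one_apply_eq_self]⟩
  have hR_unit : IsUnit R := isUnit_iff_bijective.mpr ⟨hR, hR_surj⟩
  rwa [← hR_unit.unit_spec, Units.isUnit_units_mul] at hRA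

end Fredholm

end ContinuousLinearMap

open ContinuousLinearMap

/-- Let `T` be a contraction of class `C_{11}` (both `T` and `T*` are of class
`C_{1·}`, i.e. `inf_n ‖Tⁿ x‖ > 0` for every `x ≠ 0`, and similarly for `T*`) such
that `I - T*T` is compact. Then the spectrum of `T` is contained in the unit
circle. -/
theorem spectrum_subset_circle_of_C11_compact {H : Type*} [NormedAddCommGroup H]
    [InnerProductSpace ℂ H] [CompleteSpace H] (T : H →L[ℂ] H) (hT : ‖T‖ ≤ 1)
    (hC1 : ∀ x : H, x ≠ 0 → 0 < ⨅ n : ℕ, ‖(T ^ n) x‖)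
    (hC1star : ∀ x : H, x ≠ 0 → 0 < ⨅ n : ℕ, ‖((adjoint T) ^ n) x‖)
    (hcpt : IsCompactOperator (⇑((1 : H →L[ℂ] H) - (adjoint T).comp T))) :
    spectrum ℂ T ⊆ {z : ℂ | ‖z‖ = 1} := by
  intro z hz
  have hz_le : ‖z‖ ≤ 1 :=
    (spectrum.norm_le_norm_mul_of_mem hz).trans (mul_le_one₀ hT (norm_nonneg _) norm_id_le)
  refine hz_le.eq_or_lt.resolve_right fun hz_lt => ?_
  have hS : IsUnit (1 - z • adjoint T) := by
    refine isUnit_one_sub_of_norm_lt_one ?_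
    rw [norm_smul, LinearIsometryEquiv.norm_map]
    exact (mul_le_of_le_one_right (norm_nonneg z) hT).trans_lt hz_lt
  have hfactor : adjoint T * (T - z • 1) = (1 - z • adjoint T) - (1 - (adjoint T).comp T) := by
    rw [mul_sub, mul_smul_comm, mul_one, mul_def]
    abel
  have hadj_inj : Function.Injective (adjoint T) := by
    simpa using injective_sub_smul_one_of_forall_iInf_norm_pow_pos hC1star (z := 0) (by simp)
  have hinj : Function.Injective ⇑(adjoint T * (T - z • 1)) :=
    hadj_inj.comp (injective_sub_smul_one_of_forall_iInf_norm_pow_pos hC1 hz_lt)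
  have hunit : IsUnit (adjoint T * (T - z • 1)) :=
    hfactor ▸ isUnit_sub_of_isCompactOperator_of_injective hS hcpt (hfactor ▸ hinj)
  refine spectrum.mem_iff.mp hz ?_
  rw [Algebra.algebraMap_eq_smul_one, IsUnit.sub_iff]
  exact isUnit_of_isUnit_mul_of_injective hunit hadj_inj
end
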